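/- arXiv:math/0702807 — 2 statements merged into one kernel-verified Lean document; each statement's English description precedes it below -/
import Mathlib

section
/- Let c be a smooth cost function satisfying (A1) and (A2), and let y(x,z) denote the unique point with D_x c(x, y(x,z)) = z, which is a smooth function of (x,z). Fix x, y ∈ ℝⁿ and a constant c₀ ≥ 0. Then the inequality Σ_{i,j,k,l,p,q,r,s} (c^{p,q}c_{ij,p}c_{q,rs} − c_{ij,rs}) c^{r,k}c^{s,l} ξ_iξ_jη_kη_l ≥ c₀|ξ|²|η|² holds for all ξ, η ∈ ℝⁿ with ξ ⊥ η, evaluated at (x,y), if and only if the inequality Σ_{i,j,k,l} ∂²/∂z_k∂z_l [c_{ij}(x, y(x,z))] |_{z = D_x c(x,y)} ξ_iξ_jη_kη_l ≤ −c₀|ξ|²|η|² holds for all ξ, η ∈ ℝⁿ with ξ ⊥ η, where c_{ij} = ∂²c/∂x_i∂x_j. -/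
open Set Filter Topology MeasureTheory
open scoped BigOperators

noncomputable section

/-- The partial derivative `∂f/∂x_i` of a function on `ℝⁿ`. -/
def pd {n : ℕ} (i : Fin n) (f : (Fin n → ℝ) → ℝ) (x : Fin n → ℝ) : ℝ :=
  fderiv ℝ f x (Pi.single i 1)

/-- `D_x c (x, y)`, the gradient of the cost function in the `x`-variable. -/
def Dx {n : ℕ} (c : (Fin n → ℝ) → (Fin n → ℝ) → ℝ) (x y : Fin n → ℝ) :
    Fin n → ℝ :=
  fun i => pd i (fun x' => c x' y) x

/-- `D_y c (x, y)`, the gradient of the cost function in the `y`-variable. -/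
def Dy {n : ℕ} (c : (Fin n → ℝ) → (Fin n → ℝ) → ℝ) (x y : Fin n → ℝ) :
    Fin n → ℝ :=
  fun j => pd j (fun y' => c x y') y

/-- The mixed Hessian matrix `c_{i,j} = ∂²c/∂x_i∂y_j`. -/
def mixHess {n : ℕ} (c : (Fin n → ℝ) → (Fin n → ℝ) → ℝ) (x y : Fin n → ℝ) :
    Matrix (Fin n) (Fin n) ℝ :=
  Matrix.of fun i j => pd j (fun y' => Dx c x y' i) y

/-- The inverse mixed Hessian `(c^{i,j})`. -/
def mixInv {n : ℕ} (c : (Fin n → ℝ) → (Fin n → ℝ) → ℝ) (x y : Fin n → ℝ) :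
    Matrix (Fin n) (Fin n) ℝ :=
  (mixHess c x y)⁻¹

/-- `c_{ij} = ∂²c/∂x_i∂x_j`. -/
def cxx {n : ℕ} (c : (Fin n → ℝ) → (Fin n → ℝ) → ℝ) (x y : Fin n → ℝ)
    (i j : Fin n) : ℝ :=
  pd i (fun x' => Dx c x' y j) x

/-- `c_{ij,k} = ∂³c/∂x_i∂x_j∂y_k`. -/
def cxxy {n : ℕ} (c : (Fin n → ℝ) → (Fin n → ℝ) → ℝ) (x y : Fin n → ℝ)
    (i j k : Fin n) : ℝ :=
  pd k (fun y' => cxx c x y' i j) y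

/-- `c_{q,rs} = ∂³c/∂x_q∂y_r∂y_s`. -/
def cxyy {n : ℕ} (c : (Fin n → ℝ) → (Fin n → ℝ) → ℝ) (x y : Fin n → ℝ)
    (q r s : Fin n) : ℝ :=
  pd s (fun y' => pd r (fun y'' => Dx c x y'' q) y') y

/-- `c_{ij,rs} = ∂⁴c/∂x_i∂x_j∂y_r∂y_s`. -/
def cxxyy {n : ℕ} (c : (Fin n → ℝ) → (Fin n → ℝ) → ℝ) (x y : Fin n → ℝ)
    (i j r s : Fin n) : ℝ :=
  pd s (fun y' => cxxy c x y' i j r) y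

/-- The cost function is `C^∞`-smooth (jointly in both variables). -/
def SmoothCost {n : ℕ} (c : (Fin n → ℝ) → (Fin n → ℝ) → ℝ) : Prop :=
  ContDiff ℝ (⊤ : ℕ∞) fun p : (Fin n → ℝ) × (Fin n → ℝ) => c p.1 p.2

/-- Condition (A1): for all `x, z` there is a unique `y` with `D_x c (x,y) = z`,
and for all `y, z` there is a unique `x` with `D_y c (x,y) = z`. -/
def A1 {n : ℕ} (c : (Fin n → ℝ) → (Fin n → ℝ) → ℝ) : Prop :=
  (∀ x z : Fin n → ℝ, ∃! y : Fin n → ℝ, Dx c x y = z) ∧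
  (∀ y z : Fin n → ℝ, ∃! x : Fin n → ℝ, Dy c x y = z)

/-- Condition (A2): the mixed Hessian is nonsingular everywhere. -/
def A2 {n : ℕ} (c : (Fin n → ℝ) → (Fin n → ℝ) → ℝ) : Prop :=
  ∀ x y : Fin n → ℝ, (mixHess c x y).det ≠ 0

/-- Condition (A3) with constant `c₀` at the pair `(x, y)`: for all orthogonal
`ξ, η`, `∑ (c^{p,q} c_{ij,p} c_{q,rs} - c_{ij,rs}) c^{r,k} c^{s,l} ξ_i ξ_j η_k η_l
≥ c₀ |ξ|² |η|²`. -/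
def A3at {n : ℕ} (c : (Fin n → ℝ) → (Fin n → ℝ) → ℝ) (c₀ : ℝ)
    (x y : Fin n → ℝ) : Prop :=
  ∀ ξ η : Fin n → ℝ, (∑ i : Fin n, ξ i * η i) = 0 →
    c₀ * (∑ i : Fin n, ξ i ^ 2) * (∑ i : Fin n, η i ^ 2) ≤
      ∑ i : Fin n, ∑ j : Fin n, ∑ k : Fin n, ∑ l : Fin n, ∑ r : Fin n, ∑ s : Fin n,
        ((∑ p : Fin n, ∑ q : Fin n,
            mixInv c x y p q * cxxy c x y i j p * cxyy c x y q r s)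
          - cxxyy c x y i j r s)
        * mixInv c x y r k * mixInv c x y s l * ξ i * ξ j * η k * η l

/-- `u` is semi-concave on `Ω`: for some `C > 0`, `u - C|x|²` is concave
(along all segments contained in `Ω`). -/
def SemiConcaveOn {n : ℕ} (Ω : Set (Fin n → ℝ)) (u : (Fin n → ℝ) → ℝ) : Prop :=
  ∃ C : ℝ, 0 < C ∧ ∀ x₀ ∈ Ω, ∀ x₁ ∈ Ω,
    (∀ s : ℝ, s ∈ Icc (0 : ℝ) 1 → (1 - s) • x₀ + s • x₁ ∈ Ω) →
    ∀ t ∈ Icc (0 : ℝ) 1,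
      (1 - t) * (u x₀ - C * ∑ i : Fin n, x₀ i ^ 2)
          + t * (u x₁ - C * ∑ i : Fin n, x₁ i ^ 2)
        ≤ u ((1 - t) • x₀ + t • x₁)
            - C * ∑ i : Fin n, ((1 - t) • x₀ + t • x₁) i ^ 2

/-- The supergradient `∂⁺u(x₀)` of `u` (defined on `Ω`) at `x₀`:
`u(x) ≤ u(x₀) + p·(x - x₀) + o(|x - x₀|)`. -/
def superGrad {n : ℕ} (Ω : Set (Fin n → ℝ)) (u : (Fin n → ℝ) → ℝ)
    (x₀ : Fin n → ℝ) : Set (Fin n → ℝ) :=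
  {p | ∀ ε > (0 : ℝ), ∃ δ > (0 : ℝ), ∀ x ∈ Ω, ‖x - x₀‖ < δ →
        u x ≤ u x₀ + (∑ i : Fin n, p i * (x i - x₀ i)) + ε * ‖x - x₀‖}

/-- The `c`-supergradient `∂⁺_c u(x₀)`:
`u(x) ≤ c(x,y) - c(x₀,y) + u(x₀) + o(|x - x₀|)`. -/
def cSuperGrad {n : ℕ} (c : (Fin n → ℝ) → (Fin n → ℝ) → ℝ)
    (Ω : Set (Fin n → ℝ)) (u : (Fin n → ℝ) → ℝ) (x₀ : Fin n → ℝ) :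
    Set (Fin n → ℝ) :=
  {y | ∀ ε > (0 : ℝ), ∃ δ > (0 : ℝ), ∀ x ∈ Ω, ‖x - x₀‖ < δ →
        u x ≤ c x y - c x₀ y + u x₀ + ε * ‖x - x₀‖}

/-- `h = c(·, y₀) + a₀` is a local `c`-support of `u` at `x₀`:
`h(x₀) = u(x₀)` and `u ≤ h` on a neighbourhood of `x₀` in `Ω`. -/
def IsLocalCSupport {n : ℕ} (c : (Fin n → ℝ) → (Fin n → ℝ) → ℝ)
    (Ω : Set (Fin n → ℝ)) (u : (Fin n → ℝ) → ℝ) (x₀ y₀ : Fin n → ℝ)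
    (a₀ : ℝ) : Prop :=
  u x₀ = c x₀ y₀ + a₀ ∧
  ∃ δ > (0 : ℝ), ∀ x ∈ Ω, ‖x - x₀‖ < δ → u x ≤ c x y₀ + a₀

/-- `h = c(·, y₀) + a₀` is a global `c`-support of `u` at `x₀`:
`h(x₀) = u(x₀)` and `u ≤ h` on all of `Ω`. -/
def IsGlobalCSupport {n : ℕ} (c : (Fin n → ℝ) → (Fin n → ℝ) → ℝ)
    (Ω : Set (Fin n → ℝ)) (u : (Fin n → ℝ) → ℝ) (x₀ y₀ : Fin n → ℝ)
    (a₀ : ℝ) : Prop :=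
  u x₀ = c x₀ y₀ + a₀ ∧ ∀ x ∈ Ω, u x ≤ c x y₀ + a₀

/-- `u` is locally `c`-concave on `Ω`: for every `x₀` in the closure of `Ω` and
every `y ∈ ∂⁺_c u(x₀)`, the function `c(·,y) - c(x₀,y) + u(x₀)` is a local
`c`-support of `u` at `x₀`. -/
def LocallyCConcave {n : ℕ} (c : (Fin n → ℝ) → (Fin n → ℝ) → ℝ)
    (Ω : Set (Fin n → ℝ)) (u : (Fin n → ℝ) → ℝ) : Prop :=
  ∀ x₀ ∈ closure Ω, ∀ y ∈ cSuperGrad c Ω u x₀,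
    IsLocalCSupport c Ω u x₀ y (u x₀ - c x₀ y)

/-- `u` is fully `c`-concave on `Ω`: it is locally `c`-concave and every local
`c`-support is a global `c`-support. -/
def FullyCConcave {n : ℕ} (c : (Fin n → ℝ) → (Fin n → ℝ) → ℝ)
    (Ω : Set (Fin n → ℝ)) (u : (Fin n → ℝ) → ℝ) : Prop :=
  LocallyCConcave c Ω u ∧
  ∀ x₀ ∈ closure Ω, ∀ y₀ : Fin n → ℝ, ∀ a₀ : ℝ,
    IsLocalCSupport c Ω u x₀ y₀ a₀ → ∀ x ∈ Ω, u x ≤ c x y₀ + a₀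

/-- `u` is strictly `c`-concave on `Ω`: it is fully `c`-concave and every global
`c`-support touches the graph of `u` at exactly one point. -/
def StrictlyCConcave {n : ℕ} (c : (Fin n → ℝ) → (Fin n → ℝ) → ℝ)
    (Ω : Set (Fin n → ℝ)) (u : (Fin n → ℝ) → ℝ) : Prop :=
  FullyCConcave c Ω u ∧
  ∀ x₀ ∈ closure Ω, ∀ y₀ : Fin n → ℝ, ∀ a₀ : ℝ,
    IsGlobalCSupport c Ω u x₀ y₀ a₀ →
      {x ∈ closure Ω | u x = c x y₀ + a₀}.Subsingleton

/-!
Differentiating `D_x c(x, Y(x,z)) = z` in `z` shows that the Jacobian of `z ↦ Y(x,z)` is the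
inverse mixed Hessian `(c^{i,j})` at `(x, Y(x,z))`. By the chain rule
`∂_{z_l} c_{ij}(x,Y) = c_{ij,s} c^{s,l}`; differentiating once more, with
`∂_{z_k} c^{s,l} = -c^{s,b} c_{b,qt} c^{t,k} c^{q,l}` (derivative of an inverse matrix) and the
symmetry of second `y`-derivatives, gives
`∂²_{z_k z_l} c_{ij}(x,Y) = -(c^{p,q} c_{ij,p} c_{q,rs} - c_{ij,rs}) c^{r,k} c^{s,l}`.
At `z = D_x c(x,y)` we have `Y(x,z) = y` by (A1), so the two quartic forms are negatives of
each other.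
-/

section PartialDerivatives

variable {n : ℕ}

lemma ContDiff.fderiv_of_top {E F : Type*} [NormedAddCommGroup E] [NormedSpace ℝ E]
    [NormedAddCommGroup F] [NormedSpace ℝ F] {g : E → F} (hg : ContDiff ℝ (⊤ : ℕ∞) g) :
    ContDiff ℝ (⊤ : ℕ∞) (fderiv ℝ g) :=
  hg.fderiv_right (by exact_mod_cast le_rfl)

lemma clm_apply_eq_sum_single (L : (Fin n → ℝ) →L[ℝ] ℝ) (v : Fin n → ℝ) :
    L v = ∑ s, v s * L (Pi.single s 1) := by
  have hsingle (s : Fin n) : (fun j => if s = j then (1 : ℝ) else 0) = Pi.single s 1 := by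
    funext j; simp [Pi.single_apply, eq_comm]
  simpa [hsingle] using L.toLinearMap.pi_apply_eq_sum_univ v

lemma contDiff_pd {g : (Fin n → ℝ) → ℝ} (hg : ContDiff ℝ (⊤ : ℕ∞) g) (i : Fin n) :
    ContDiff ℝ (⊤ : ℕ∞) (pd i g) :=
  hg.fderiv_of_top.clm_apply contDiff_const

lemma pd_fst_eq_fderiv {E : Type*} [NormedAddCommGroup E] [NormedSpace ℝ E]
    {F : (Fin n → ℝ) × E → ℝ} {x : Fin n → ℝ} {y : E} (hF : DifferentiableAt ℝ F (x, y))
    (i : Fin n) :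
    pd i (fun x' => F (x', y)) x = fderiv ℝ F (x, y) (Pi.single i 1, 0) := by
  have h : HasFDerivAt (fun x' => F (x', y))
      ((fderiv ℝ F (x, y)).comp (ContinuousLinearMap.inl ℝ _ E)) x :=
    hF.hasFDerivAt.comp x (hasFDerivAt_prodMk_left x y)
  rw [pd, h.fderiv]
  rfl

lemma contDiff_pd_fst {E : Type*} [NormedAddCommGroup E] [NormedSpace ℝ E]
    {F : (Fin n → ℝ) × E → ℝ} (hF : ContDiff ℝ (⊤ : ℕ∞) F) (i : Fin n) :
    ContDiff ℝ (⊤ : ℕ∞) fun p : (Fin n → ℝ) × E => pd i (fun x' => F (x', p.2)) p.1 := by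
  simp only [pd_fst_eq_fderiv ((hF.differentiable (by simp)) _)]
  exact hF.fderiv_of_top.clm_apply contDiff_const

lemma pd_pd_comm {g : (Fin n → ℝ) → ℝ} (hg : ContDiff ℝ (⊤ : ℕ∞) g) (i j : Fin n)
    (y : Fin n → ℝ) : pd i (pd j g) y = pd j (pd i g) y := by
  have hg' : DifferentiableAt ℝ (fderiv ℝ g) y := hg.fderiv_of_top.differentiable (by simp) y
  have hsnd (v w : Fin n) :
      pd v (pd w g) y = fderiv ℝ (fderiv ℝ g) y (Pi.single v 1) (Pi.single w 1) := by
    change fderiv ℝ (fun y' => fderiv ℝ g y' (Pi.single w 1)) y (Pi.single v 1) = _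
    simp [fderiv_clm_apply hg' (differentiableAt_const _)]
  rw [hsnd, hsnd]
  exact hg.contDiffAt.isSymmSndFDerivAt (by simp; exact WithTop.coe_le_coe.2 le_top) _ _

lemma pd_comp {m : ℕ} {g : (Fin m → ℝ) → ℝ} {Φ : (Fin n → ℝ) → Fin m → ℝ} {z : Fin n → ℝ}
    (hg : DifferentiableAt ℝ g (Φ z)) (hΦ : DifferentiableAt ℝ Φ z) (l : Fin n) :
    pd l (fun z' => g (Φ z')) z = ∑ s, pd s g (Φ z) * pd l (fun z' => Φ z' s) z := by
  have h : HasFDerivAt (fun z' => g (Φ z')) _ z := hg.hasFDerivAt.comp z hΦ.hasFDerivAt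
  rw [pd, h.fderiv, ContinuousLinearMap.comp_apply, clm_apply_eq_sum_single]
  refine Finset.sum_congr rfl fun s _ => ?_
  rw [mul_comm, pd, pd, fderiv_apply hΦ]
  rfl

lemma pd_sum_mul {ι : Type*} [Fintype ι] {A B : ι → (Fin n → ℝ) → ℝ} {z : Fin n → ℝ}
    (hA : ∀ s, DifferentiableAt ℝ (A s) z) (hB : ∀ s, DifferentiableAt ℝ (B s) z) (k : Fin n) :
    pd k (fun z' => ∑ s, A s z' * B s z') z
      = ∑ s, (pd k (A s) z * B s z + A s z * pd k (B s) z) := by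
  have h : HasFDerivAt (fun z' => ∑ s, A s z' * B s z') _ z :=
    HasFDerivAt.fun_sum fun s _ => (hA s).hasFDerivAt.mul (hB s).hasFDerivAt
  rw [pd, h.fderiv]
  simp [pd, add_comm, mul_comm]

lemma pd_const (r : ℝ) (z : Fin n → ℝ) (k : Fin n) : pd k (fun _ => r) z = 0 := by
  simp [pd]

def pdMatrix {ι κ : Type*} (k : Fin n) (M : (Fin n → ℝ) → Matrix ι κ ℝ) (z : Fin n → ℝ) :
    Matrix ι κ ℝ :=
  Matrix.of fun a b => pd k (fun z' => M z' a b) z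

lemma pdMatrix_inv {ι : Type*} [Fintype ι] [DecidableEq ι]
    {M N : (Fin n → ℝ) → Matrix ι ι ℝ} {z : Fin n → ℝ} (hMN : ∀ z', M z' * N z' = 1)
    (hM : ∀ a b, DifferentiableAt ℝ (fun z' => M z' a b) z)
    (hN : ∀ a b, DifferentiableAt ℝ (fun z' => N z' a b) z) (k : Fin n) :
    pdMatrix k N z = -(N z * pdMatrix k M z * N z) := by
  have hNM (z') : N z' * M z' = 1 := mul_eq_one_comm.1 (hMN z')
  have hprod : pdMatrix k N z * M z + N z * pdMatrix k M z = 0 := by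
    ext a q
    have h0 : pd k (fun z' => ∑ b, N z' a b * M z' b q) z = 0 := by
      simp only [← Matrix.mul_apply, hNM]
      exact pd_const _ z k
    rw [pd_sum_mul (fun b => hN a b) (fun b => hM b q)] at h0
    simpa [pdMatrix, Matrix.mul_apply, Finset.sum_add_distrib] using h0
  calc pdMatrix k N z = pdMatrix k N z * M z * N z := by rw [Matrix.mul_assoc, hMN, Matrix.mul_one]
    _ = -(N z * pdMatrix k M z * N z) := by rw [eq_neg_of_add_eq_zero_left hprod, Matrix.neg_mul]

def jacobian {m : ℕ} (Φ : (Fin n → ℝ) → Fin m → ℝ) (z : Fin n → ℝ) : Matrix (Fin m) (Fin n) ℝ :=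
  Matrix.of fun s l => pd l (fun z' => Φ z' s) z

lemma contDiff_jacobian_apply {m : ℕ} {Φ : (Fin n → ℝ) → Fin m → ℝ}
    (hΦ : ContDiff ℝ (⊤ : ℕ∞) Φ) (s : Fin m) (l : Fin n) :
    ContDiff ℝ (⊤ : ℕ∞) fun z => jacobian Φ z s l :=
  contDiff_pd (contDiff_pi.1 hΦ s) l

end PartialDerivatives

/-- The Ma–Trudinger–Wang tensor: `A3at c c₀ x y` says that
`∑ mtwTensor c x y i j k l * ξ i * ξ j * η k * η l ≥ c₀ |ξ|² |η|²` for `ξ ⊥ η`. -/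
def mtwTensor {n : ℕ} (c : (Fin n → ℝ) → (Fin n → ℝ) → ℝ) (x y : Fin n → ℝ)
    (i j k l : Fin n) : ℝ :=
  ∑ r : Fin n, ∑ s : Fin n,
    ((∑ p : Fin n, ∑ q : Fin n, mixInv c x y p q * cxxy c x y i j p * cxyy c x y q r s)
      - cxxyy c x y i j r s) * mixInv c x y r k * mixInv c x y s l

namespace SmoothCost

variable {n : ℕ} {c : (Fin n → ℝ) → (Fin n → ℝ) → ℝ} (hc : SmoothCost c)
include hc

lemma contDiff_Dx (q : Fin n) : ContDiff ℝ (⊤ : ℕ∞) fun p : (Fin n → ℝ) × (Fin n → ℝ) =>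
    Dx c p.1 p.2 q :=
  contDiff_pd_fst hc q

lemma contDiff_cxx (i j : Fin n) : ContDiff ℝ (⊤ : ℕ∞) fun p : (Fin n → ℝ) × (Fin n → ℝ) =>
    cxx c p.1 p.2 i j :=
  contDiff_pd_fst (hc.contDiff_Dx j) i

lemma contDiff_Dx_right (x : Fin n → ℝ) (q : Fin n) :
    ContDiff ℝ (⊤ : ℕ∞) fun y => Dx c x y q :=
  (hc.contDiff_Dx q).comp (contDiff_prodMk_right x)

lemma contDiff_cxx_right (x : Fin n → ℝ) (i j : Fin n) :
    ContDiff ℝ (⊤ : ℕ∞) fun y => cxx c x y i j :=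
  (hc.contDiff_cxx i j).comp (contDiff_prodMk_right x)

lemma contDiff_mixHess_right (x : Fin n → ℝ) (b q : Fin n) :
    ContDiff ℝ (⊤ : ℕ∞) fun y => mixHess c x y b q :=
  contDiff_pd (hc.contDiff_Dx_right x b) q

lemma contDiff_cxxy_right (x : Fin n → ℝ) (i j s : Fin n) :
    ContDiff ℝ (⊤ : ℕ∞) fun y => cxxy c x y i j s :=
  contDiff_pd (hc.contDiff_cxx_right x i j) s

lemma cxyy_comm (x y : Fin n → ℝ) (q r s : Fin n) : cxyy c x y q r s = cxyy c x y q s r :=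
  pd_pd_comm (hc.contDiff_Dx_right x q) s r y

lemma cxxyy_comm (x y : Fin n → ℝ) (i j r s : Fin n) :
    cxxyy c x y i j r s = cxxyy c x y i j s r :=
  pd_pd_comm (hc.contDiff_cxx_right x i j) s r y

end SmoothCost

lemma sum_chainRule_terms_eq {n : ℕ} (N : Matrix (Fin n) (Fin n) ℝ) (A : Fin n → ℝ)
    (B : Fin n → Fin n → ℝ) (T : Fin n → Fin n → Fin n → ℝ) (hB : ∀ r s, B r s = B s r)
    (hT : ∀ q r s, T q r s = T q s r) (k l : Fin n) :
    ∑ s, ((∑ t, B s t * N t k) * N s l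
        + A s * -(N * Matrix.of (fun b q => ∑ t, T b q t * N t k) * N) s l)
      = -∑ r, ∑ s, ((∑ p, ∑ q, N p q * A p * T q r s) - B r s) * N r k * N s l := by
  have hBterm : ∑ s, (∑ t, B s t * N t k) * N s l = ∑ r, ∑ s, B r s * N r k * N s l := by
    simp only [Finset.sum_mul]
    rw [Finset.sum_comm]
    refine Finset.sum_congr rfl fun r _ => Finset.sum_congr rfl fun s _ => ?_
    rw [hB]
  have hTterm : ∑ s, A s * (N * Matrix.of (fun b q => ∑ t, T b q t * N t k) * N) s l
      = ∑ r, ∑ s, (∑ p, ∑ q, N p q * A p * T q r s) * N r k * N s l := by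
    simp only [Matrix.mul_apply, Matrix.of_apply, Finset.mul_sum, Finset.sum_mul]
    rw [Finset.sum_comm]
    conv_rhs =>
      rw [Finset.sum_comm]; enter [2, q]; rw [Finset.sum_comm]; enter [2, s]; rw [Finset.sum_comm]
    refine Finset.sum_congr rfl fun q _ => Finset.sum_congr rfl fun s _ =>
      Finset.sum_congr rfl fun b _ => Finset.sum_congr rfl fun t _ => ?_
    rw [hT]
    ring
  rw [← sub_eq_zero]
  simp only [mul_neg, Finset.sum_add_distrib, Finset.sum_neg_distrib, sub_mul,
    Finset.sum_sub_distrib, hBterm, hTterm]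
  ring

section CostExponential

variable {n : ℕ} {c : (Fin n → ℝ) → (Fin n → ℝ) → ℝ} {x : Fin n → ℝ} {Φ : (Fin n → ℝ) → Fin n → ℝ}
  (hc : SmoothCost c) (hΦ : ∀ z, Dx c x (Φ z) = z) (hΦs : ContDiff ℝ (⊤ : ℕ∞) Φ)

include hΦs in
lemma pd_comp_eq_sum_jacobian {g : (Fin n → ℝ) → ℝ} (hg : ContDiff ℝ (⊤ : ℕ∞) g)
    (z : Fin n → ℝ) (l : Fin n) :
    pd l (fun z' => g (Φ z')) z = ∑ s, pd s g (Φ z) * jacobian Φ z s l :=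
  pd_comp (hg.differentiable (by simp) _) (hΦs.differentiable (by simp) _) l

include hc hΦ hΦs in
lemma mixHess_mul_jacobian (z : Fin n → ℝ) : mixHess c x (Φ z) * jacobian Φ z = 1 := by
  ext q l
  have h := pd_comp_eq_sum_jacobian hΦs (hc.contDiff_Dx_right x q) z l
  simp only [hΦ] at h
  calc (mixHess c x (Φ z) * jacobian Φ z) q l = pd l (fun z' => z' q) z := h.symm
    _ = (1 : Matrix (Fin n) (Fin n) ℝ) q l := by
      rw [pd, show (fun z' : Fin n → ℝ => z' q) = ContinuousLinearMap.proj (R := ℝ) q from rfl,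
        ContinuousLinearMap.fderiv]
      simp [Matrix.one_apply, Pi.single_apply]

include hc hΦ hΦs in
lemma mixInv_eq_jacobian (z : Fin n → ℝ) : mixInv c x (Φ z) = jacobian Φ z :=
  Matrix.inv_eq_right_inv (mixHess_mul_jacobian hc hΦ hΦs z)

include hc hΦ hΦs in
lemma pdMatrix_jacobian (z : Fin n → ℝ) (k : Fin n) :
    pdMatrix k (jacobian Φ) z = -(jacobian Φ z
      * Matrix.of (fun b q => ∑ t, cxyy c x (Φ z) b q t * jacobian Φ z t k) * jacobian Φ z) := by
  rw [pdMatrix_inv (mixHess_mul_jacobian hc hΦ hΦs)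
    (fun b q => ((hc.contDiff_mixHess_right x b q).comp hΦs).differentiable (by simp) z)
    (fun s l => (contDiff_jacobian_apply hΦs s l).differentiable (by simp) z)]
  congr 3
  ext b q
  exact pd_comp_eq_sum_jacobian hΦs (hc.contDiff_mixHess_right x b q) z k

include hc hΦ hΦs in
lemma pd_pd_cxx_comp_eq_neg_mtwTensor (i j k l : Fin n) (z : Fin n → ℝ) :
    pd k (fun z' => pd l (fun z'' => cxx c x (Φ z'') i j) z') z = -mtwTensor c x (Φ z) i j k l := by
  have hfirst : (fun z' => pd l (fun z'' => cxx c x (Φ z'') i j) z')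
      = fun z' => ∑ s, cxxy c x (Φ z') i j s * jacobian Φ z' s l :=
    funext fun z' => pd_comp_eq_sum_jacobian hΦs (hc.contDiff_cxx_right x i j) z' l
  have hcxxy (s : Fin n) : pd k (fun z' => cxxy c x (Φ z') i j s) z
      = ∑ t, cxxyy c x (Φ z) i j s t * jacobian Φ z t k :=
    pd_comp_eq_sum_jacobian hΦs (hc.contDiff_cxxy_right x i j s) z k
  have hjac (s : Fin n) := congrFun₂ (pdMatrix_jacobian hc hΦ hΦs z k) s l
  simp only [pdMatrix, Matrix.of_apply] at hjac
  rw [hfirst, pd_sum_mul (A := fun s z' => cxxy c x (Φ z') i j s)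
    (B := fun s z' => jacobian Φ z' s l)
    (fun s => ((hc.contDiff_cxxy_right x i j s).comp hΦs).differentiable (by simp) z)
    (fun s => (contDiff_jacobian_apply hΦs s l).differentiable (by simp) z)]
  simp only [hcxxy, hjac, Matrix.neg_apply]
  rw [mtwTensor, mixInv_eq_jacobian hc hΦ hΦs]
  exact sum_chainRule_terms_eq _ _ _ _ (hc.cxxyy_comm x (Φ z) i j) (hc.cxyy_comm x (Φ z)) k l

end CostExponential

theorem statement4_general
    {n : ℕ}
    (c : (Fin n → ℝ) → (Fin n → ℝ) → ℝ)
    (hc : SmoothCost c) (hA1 : A1 c)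
    (Y : (Fin n → ℝ) → (Fin n → ℝ) → (Fin n → ℝ))
    (hY : ∀ x z : Fin n → ℝ, Dx c x (Y x z) = z)
    (hYs : ContDiff ℝ (⊤ : ℕ∞) fun p : (Fin n → ℝ) × (Fin n → ℝ) => Y p.1 p.2)
    (x y : Fin n → ℝ) (c₀ : ℝ) :
    A3at c c₀ x y ↔
      ∀ ξ η : Fin n → ℝ, (∑ i : Fin n, ξ i * η i) = 0 →
        (∑ i : Fin n, ∑ j : Fin n, ∑ k : Fin n, ∑ l : Fin n,
            pd k (fun z => pd l (fun z' => cxx c x (Y x z') i j) z) (Dx c x y)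
              * ξ i * ξ j * η k * η l)
          ≤ -(c₀ * (∑ i : Fin n, ξ i ^ 2) * (∑ i : Fin n, η i ^ 2)) := by
  have hYy : Y x (Dx c x y) = y := (hA1.1 x (Dx c x y)).unique (hY x _) rfl
  have hcoeff (i j k l : Fin n) :
      pd k (fun z => pd l (fun z' => cxx c x (Y x z') i j) z) (Dx c x y)
        = -mtwTensor c x y i j k l := by
    rw [pd_pd_cxx_comp_eq_neg_mtwTensor hc (hY x) (hYs.comp (contDiff_prodMk_right x)), hYy]
  refine forall₂_congr fun ξ η => imp_congr_right fun _ => ?_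
  simp only [hcoeff, mtwTensor, neg_mul, Finset.sum_mul, Finset.sum_neg_distrib]
  exact neg_le_neg_iff.symm

/-- Equivalence of formulation (1.8) of condition (A3) with the formulation
(1.9) in terms of second `z`-derivatives of `c_{ij}(x, y(x,z))`. -/
theorem statement4
    {n : ℕ} (hn : 2 ≤ n)
    (c : (Fin n → ℝ) → (Fin n → ℝ) → ℝ)
    (hc : SmoothCost c) (hA1 : A1 c) (hA2 : A2 c)
    (Y : (Fin n → ℝ) → (Fin n → ℝ) → (Fin n → ℝ))
    (hY : ∀ x z : Fin n → ℝ, Dx c x (Y x z) = z)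
    (hYs : ContDiff ℝ (⊤ : ℕ∞) fun p : (Fin n → ℝ) × (Fin n → ℝ) => Y p.1 p.2)
    (x y : Fin n → ℝ) (c₀ : ℝ) (hc₀ : 0 ≤ c₀) :
    A3at c c₀ x y ↔
      ∀ ξ η : Fin n → ℝ, (∑ i : Fin n, ξ i * η i) = 0 →
        (∑ i : Fin n, ∑ j : Fin n, ∑ k : Fin n, ∑ l : Fin n,
            pd k (fun z => pd l (fun z' => cxx c x (Y x z') i j) z) (Dx c x y)
              * ξ i * ξ j * η k * η l)
          ≤ -(c₀ * (∑ i : Fin n, ξ i ^ 2) * (∑ i : Fin n, η i ^ 2)) :=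
  statement4_general c hc hA1 Y hY hYs x y c₀
end
end

section
/- Let c be a smooth cost function, let Ω ⊂ ℝⁿ be a domain, and let u be semi-concave on Ω. Suppose x_k ∈ Ω with x_k → x₀ ∈ Ω, a_k → a₀ in ℝ, and for each k the function h_k = c(·, y₀) + a_k is a local c-support of u at x_k (for a fixed y₀ ∈ ℝⁿ). Then y₀ ∈ ∂⁺_c u(x₀) and a₀ = u(x₀) − c(x₀, y₀); if in addition u is locally c-concave, then h₀ = c(·, y₀) + a₀ is a local c-support of u at x₀. -/
open Set Filter Topology MeasureTheory
open scoped BigOperators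

noncomputable section

/-!
Subtracting `C |x|²` makes `u` concave on every ball in `Ω`; in particular `u` is continuous
there. If a function `g`, differentiable at `x`, touches `u` from above at `x`, comparing
difference quotients of `u` and `g` along the segment from `x` to `y` shows
`u y ≤ u x + Dg(x)(y - x) + C |y - x|²` on the whole ball. Applied to `c(·, y₀) + a_k` at `x_k`
and passed to the limit `k → ∞`, this gives `u x ≤ u x₀ + D_x c(x₀, y₀)(x - x₀) + C |x - x₀|²`
near `x₀`, which is the `c`-supergradient inequality because `c(·, y₀)` is differentiable at
`x₀`. Continuity of `u` identifies `a₀`, and local `c`-concavity then yields the last claim.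
-/

theorem le_add_deriv_add_of_touching {ψ γ : ℝ → ℝ} {γ' K : ℝ} (hγ : HasDerivAt γ γ' 0)
    (h0 : ψ 0 = γ 0) (hle : ∀ᶠ t in 𝓝[>] 0, ψ t ≤ γ t)
    (hψ : ∀ᶠ t in 𝓝[>] 0, (1 - t) * ψ 0 + t * ψ 1 - t * (1 - t) * K ≤ ψ t) :
    ψ 1 ≤ ψ 0 + γ' + K := by
  have hlim : Tendsto (fun t => ψ 1 - ψ 0 - (1 - t) * K) (𝓝[>] 0) (𝓝 (ψ 1 - ψ 0 - K)) := by
    have : Continuous fun t : ℝ => ψ 1 - ψ 0 - (1 - t) * K := by fun_prop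
    simpa using (this.tendsto 0).mono_left nhdsWithin_le_nhds
  suffices ψ 1 - ψ 0 - K ≤ γ' by linarith
  refine le_of_tendsto_of_tendsto hlim hγ.tendsto_slope_zero_right ?_
  filter_upwards [hle, hψ, self_mem_nhdsWithin] with t hγt hψt (ht : 0 < t)
  rw [zero_add, smul_eq_mul, le_inv_mul_iff₀ ht]
  linarith

theorem sum_sq_sub_isLittleO {n : ℕ} (x₀ : Fin n → ℝ) :
    (fun x : Fin n → ℝ => ∑ i, (x i - x₀ i) ^ 2) =o[𝓝 x₀] fun x => x - x₀ := by
  refine Asymptotics.IsLittleO.fun_sum fun i _ => ?_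
  refine (Asymptotics.isBigO_of_le _ fun x => ?_).trans_isLittleO
    (Asymptotics.isLittleO_pow_sub_sub x₀ one_lt_two)
  simpa [norm_pow] using pow_le_pow_left₀ (norm_nonneg _) (norm_le_pi_norm (x - x₀) i) 2

theorem SemiConcaveOn.exists_concaveOn {n : ℕ} {Ω : Set (Fin n → ℝ)} {u : (Fin n → ℝ) → ℝ}
    (hu : SemiConcaveOn Ω u) :
    ∃ C : ℝ, ∀ s ⊆ Ω, Convex ℝ s → ConcaveOn ℝ s fun z => u z - C * ∑ i, z i ^ 2 := by
  obtain ⟨C, -, hC⟩ := hu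
  refine ⟨C, fun s hsΩ hs => ⟨hs, fun p hp q hq a b ha hb hab => ?_⟩⟩
  obtain rfl : a = 1 - b := by linarith
  exact hC p (hsΩ hp) q (hsΩ hq) (fun t ht => hsΩ (hs hp hq (by linarith [ht.2]) ht.1 (by ring)))
    b ⟨hb, by linarith⟩

section ConcaveSubSq

variable {n : ℕ} {s : Set (Fin n → ℝ)} {u : (Fin n → ℝ) → ℝ} {C : ℝ}

theorem ConcaveOn.continuousOn_of_sub_sq (hv : ConcaveOn ℝ s fun z => u z - C * ∑ i, z i ^ 2)
    (hs : IsOpen s) : ContinuousOn u s := by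
  have hq : Continuous fun z : Fin n → ℝ => C * ∑ i, z i ^ 2 := by fun_prop
  exact ((hv.continuousOn hs).add hq.continuousOn).congr fun z _ => by simp

theorem sum_sq_add_smul_sub (x y : Fin n → ℝ) (t : ℝ) :
    ∑ i, (x + t • (y - x)) i ^ 2 =
      (1 - t) * ∑ i, x i ^ 2 + t * ∑ i, y i ^ 2 - t * (1 - t) * ∑ i, (y i - x i) ^ 2 := by
  simp only [Finset.mul_sum, ← Finset.sum_add_distrib, ← Finset.sum_sub_distrib]
  refine Finset.sum_congr rfl fun i _ => ?_
  simp only [Pi.add_apply, Pi.smul_apply, Pi.sub_apply, smul_eq_mul]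
  ring

theorem ConcaveOn.le_add_smul_sub_of_sub_sq (hv : ConcaveOn ℝ s fun z => u z - C * ∑ i, z i ^ 2)
    {x y : Fin n → ℝ} (hx : x ∈ s) (hy : y ∈ s) {t : ℝ} (ht : t ∈ Icc (0 : ℝ) 1) :
    (1 - t) * u x + t * u y - t * (1 - t) * (C * ∑ i, (y i - x i) ^ 2) ≤ u (x + t • (y - x)) := by
  have h := hv.2 hx hy (sub_nonneg.2 ht.2) ht.1 (sub_add_cancel 1 t)
  rw [show (1 - t) • x + t • y = x + t • (y - x) by module] at h
  simp only [smul_eq_mul, sum_sq_add_smul_sub] at h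
  linarith

theorem ConcaveOn.le_add_fderiv_of_sub_sq_of_touching
    (hv : ConcaveOn ℝ s fun z => u z - C * ∑ i, z i ^ 2) {x y : Fin n → ℝ} (hx : x ∈ s)
    (hy : y ∈ s) {g : (Fin n → ℝ) → ℝ} {g' : (Fin n → ℝ) →L[ℝ] ℝ} (hg : HasFDerivAt g g' x)
    (hgx : u x = g x) (hle : ∀ᶠ z in 𝓝[s] x, u z ≤ g z) :
    u y ≤ u x + g' (y - x) + C * ∑ i, (y i - x i) ^ 2 := by
  set ℓ : ℝ → Fin n → ℝ := fun t => x + t • (y - x)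
  have hℓ : HasDerivAt ℓ (y - x) 0 := by
    have := ((hasDerivAt_id (0 : ℝ)).smul_const (y - x)).const_add x
    rwa [one_smul] at this
  have hℓ0 : ℓ 0 = x := by simp [ℓ]
  have hℓs : ∀ᶠ t in 𝓝[>] (0 : ℝ), t ∈ Icc (0 : ℝ) 1 ∧ ℓ t ∈ s := by
    filter_upwards [Ioo_mem_nhdsGT one_pos] with t ht
    exact ⟨Ioo_subset_Icc_self ht, hv.1.add_smul_sub_mem hx hy (Ioo_subset_Icc_self ht)⟩
  have hℓlim : Tendsto ℓ (𝓝[>] 0) (𝓝[s] x) := by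
    refine tendsto_nhdsWithin_iff.2 ⟨?_, hℓs.mono fun t ht => ht.2⟩
    simpa [hℓ0] using hℓ.continuousAt.tendsto.mono_left nhdsWithin_le_nhds
  have key := le_add_deriv_add_of_touching (ψ := u ∘ ℓ) (γ := g ∘ ℓ) (K := C * ∑ i, (y i - x i) ^ 2)
    (hℓ0 ▸ hg |>.comp_hasDerivAt 0 hℓ) (by simp [hℓ0, hgx]) (hℓlim.eventually hle)
    (hℓs.mono fun t ht => by simpa [ℓ] using hv.le_add_smul_sub_of_sub_sq hx hy ht.1)
  simpa [ℓ] using key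

end ConcaveSubSq

section CSupport

variable {n : ℕ} {c : (Fin n → ℝ) → (Fin n → ℝ) → ℝ} {Ω : Set (Fin n → ℝ)} {u : (Fin n → ℝ) → ℝ}

theorem mem_cSuperGrad_of_le_add_isLittleO {x₀ y : Fin n → ℝ} {R : (Fin n → ℝ) → ℝ}
    (hR : R =o[𝓝 x₀] fun x => x - x₀)
    (hle : ∀ᶠ x in 𝓝[Ω] x₀, u x ≤ c x y - c x₀ y + u x₀ + R x) :
    y ∈ cSuperGrad c Ω u x₀ := by
  intro ε hε
  obtain ⟨δ, hδ, h⟩ :=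
    Metric.eventually_nhds_iff.1 ((hR.def hε).and (eventually_nhdsWithin_iff.1 hle))
  refine ⟨δ, hδ, fun x hx hxδ => ?_⟩
  obtain ⟨hRx, hux⟩ := h (by rwa [dist_eq_norm])
  linarith [hux hx, Real.le_norm_self (R x)]

theorem IsLocalCSupport.eventually_le {x y : Fin n → ℝ} {a : ℝ}
    (h : IsLocalCSupport c Ω u x y a) : ∀ᶠ z in 𝓝[Ω] x, u z ≤ c z y + a := by
  obtain ⟨-, δ, hδ, hle⟩ := h
  filter_upwards [inter_mem_nhdsWithin Ω (Metric.ball_mem_nhds x hδ)] with z ⟨hzΩ, hzδ⟩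
  exact hle z hzΩ (by rwa [← dist_eq_norm])

theorem ConcaveOn.le_add_fderiv_of_sub_sq_of_tendsto_isLocalCSupport {s : Set (Fin n → ℝ)} {C : ℝ}
    (hv : ConcaveOn ℝ s fun z => u z - C * ∑ i, z i ^ 2) (hsΩ : s ⊆ Ω) (hs : IsOpen s)
    {x₀ y₀ : Fin n → ℝ} (hx₀ : x₀ ∈ s) (hc : ContDiff ℝ 1 fun x => c x y₀)
    {xk : ℕ → Fin n → ℝ} {ak : ℕ → ℝ} (hxk : Tendsto xk atTop (𝓝 x₀))
    (hsupp : ∀ k, IsLocalCSupport c Ω u (xk k) y₀ (ak k)) {x : Fin n → ℝ} (hx : x ∈ s) :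
    u x ≤ u x₀ + fderiv ℝ (fun x => c x y₀) x₀ (x - x₀) + C * ∑ i, (x i - x₀ i) ^ 2 := by
  have hu : ContinuousAt u x₀ :=
    (hv.continuousOn_of_sub_sq hs).continuousAt (hs.mem_nhds hx₀)
  have hq : Continuous fun z : Fin n → ℝ => C * ∑ i, (x i - z i) ^ 2 := by fun_prop
  have hF : ContinuousAt (fun z => u z + fderiv ℝ (fun x => c x y₀) z (x - z)
      + C * ∑ i, (x i - z i) ^ 2) x₀ :=
    (hu.add ((hc.continuous_fderiv one_ne_zero).clm_apply
      (continuous_const.sub continuous_id)).continuousAt).add hq.continuousAt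
  refine ge_of_tendsto (hF.tendsto.comp hxk) ?_
  filter_upwards [hxk (hs.mem_nhds hx₀)] with k hk
  exact hv.le_add_fderiv_of_sub_sq_of_touching hk hx
    ((hc.differentiable one_ne_zero _).hasFDerivAt.add_const (ak k)) (hsupp k).1
    (nhdsWithin_mono _ hsΩ (hsupp k).eventually_le)

end CSupport

theorem statement14_general
    {n : ℕ}
    (c : (Fin n → ℝ) → (Fin n → ℝ) → ℝ)
    (hc : SmoothCost c)
    (Ω : Set (Fin n → ℝ)) (hΩo : IsOpen Ω)
    (u : (Fin n → ℝ) → ℝ) (husc : SemiConcaveOn Ω u)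
    (x₀ : Fin n → ℝ) (hx₀ : x₀ ∈ Ω) (y₀ : Fin n → ℝ) (a₀ : ℝ)
    (xk : ℕ → Fin n → ℝ)
    (hxk : Filter.Tendsto xk Filter.atTop (nhds x₀))
    (ak : ℕ → ℝ) (hak : Filter.Tendsto ak Filter.atTop (nhds a₀))
    (hsupp : ∀ k : ℕ, IsLocalCSupport c Ω u (xk k) y₀ (ak k)) :
    y₀ ∈ cSuperGrad c Ω u x₀ ∧ a₀ = u x₀ - c x₀ y₀ ∧
      (LocallyCConcave c Ω u → IsLocalCSupport c Ω u x₀ y₀ a₀) := by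
  obtain ⟨C, hC⟩ := husc.exists_concaveOn
  obtain ⟨r, hr, hball⟩ := Metric.isOpen_iff.1 hΩo x₀ hx₀
  have hv := hC _ hball (convex_ball x₀ r)
  have hx₀r : x₀ ∈ Metric.ball x₀ r := Metric.mem_ball_self hr
  have hf : ContDiff ℝ 1 fun x => c x y₀ :=
    (hc.comp (contDiff_id.prodMk contDiff_const)).of_le (by exact_mod_cast le_top)
  have hu : ContinuousAt u x₀ :=
    (hv.continuousOn_of_sub_sq Metric.isOpen_ball).continuousAt
      (Metric.isOpen_ball.mem_nhds hx₀r)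
  have ha₀ : a₀ = u x₀ - c x₀ y₀ := by
    refine tendsto_nhds_unique hak (((hu.tendsto.comp hxk).sub
      ((hf.continuous.tendsto x₀).comp hxk)).congr fun k => ?_)
    simp [(hsupp k).1]
  have hy₀ : y₀ ∈ cSuperGrad c Ω u x₀ := by
    refine mem_cSuperGrad_of_le_add_isLittleO (((sum_sq_sub_isLittleO x₀).const_mul_left C).sub
      (hf.differentiable one_ne_zero x₀).hasFDerivAt.isLittleO) ?_
    filter_upwards [nhdsWithin_le_nhds (Metric.ball_mem_nhds x₀ hr)] with x hx
    have hle := hv.le_add_fderiv_of_sub_sq_of_tendsto_isLocalCSupport hball Metric.isOpen_ball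
      hx₀r hf hxk hsupp hx
    linarith
  exact ⟨hy₀, ha₀, fun hlc => ha₀ ▸ hlc x₀ (subset_closure hx₀) y₀ hy₀⟩

/-- Limits of local `c`-supports: if `h_k = c(·,y₀) + a_k` is a local
`c`-support of `u` at `x_k`, with `x_k → x₀` and `a_k → a₀`, then
`y₀ ∈ ∂⁺_c u(x₀)`, `a₀ = u(x₀) - c(x₀,y₀)`, and if `u` is locally `c`-concave
then `c(·,y₀) + a₀` is a local `c`-support of `u` at `x₀`. -/
theorem statement14
    {n : ℕ} (hn : 2 ≤ n)
    (c : (Fin n → ℝ) → (Fin n → ℝ) → ℝ)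
    (hc : SmoothCost c)
    (Ω : Set (Fin n → ℝ)) (hΩo : IsOpen Ω) (hΩconn : IsConnected Ω)
    (u : (Fin n → ℝ) → ℝ) (husc : SemiConcaveOn Ω u)
    (x₀ : Fin n → ℝ) (hx₀ : x₀ ∈ Ω) (y₀ : Fin n → ℝ) (a₀ : ℝ)
    (xk : ℕ → Fin n → ℝ) (hxkmem : ∀ k : ℕ, xk k ∈ Ω)
    (hxk : Filter.Tendsto xk Filter.atTop (nhds x₀))
    (ak : ℕ → ℝ) (hak : Filter.Tendsto ak Filter.atTop (nhds a₀))
    (hsupp : ∀ k : ℕ, IsLocalCSupport c Ω u (xk k) y₀ (ak k)) :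
    y₀ ∈ cSuperGrad c Ω u x₀ ∧ a₀ = u x₀ - c x₀ y₀ ∧
      (LocallyCConcave c Ω u → IsLocalCSupport c Ω u x₀ y₀ a₀) :=
  statement14_general c hc Ω hΩo u husc x₀ hx₀ y₀ a₀ xk hxk ak hak hsupp
end
end
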